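/- (Explicit example of a non-cylindrical ruled translating soliton.) Define Y(s,t) = (−(1/2)·log(1 + s²) + t, arctan(s) + s + t·s, s + t·s) for s ∈ ℝ and t > −3/2, i.e., the ruled surface with base curve γ(s) = (−(1/2)log(1 + s²), arctan(s) + s, s) and ruling direction w(s) = (1, s, s). Then at every such (s,t) one has EG − F² = (3 + 2t)/(1 + s²) > 0 (the surface is spacelike, hence non-degenerate), and Y satisfies the translating soliton equation with respect to v = (1, 0, 0). -/

import Mathlib

noncomputable section

/-- The Lorentzian (Minkowski) inner product on ℝ³:
`⟨a,b⟩ = a₁b₁ + a₂b₂ − a₃b₃`. -/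
def mink (a b : Fin 3 → ℝ) : ℝ := a 0 * b 0 + a 1 * b 1 - a 2 * b 2

/-- Determinant of the 3×3 matrix with rows `a`, `b`, `c`. -/
def det3 (a b c : Fin 3 → ℝ) : ℝ :=
  a 0 * (b 1 * c 2 - b 2 * c 1) - a 1 * (b 0 * c 2 - b 2 * c 0)
    + a 2 * (b 0 * c 1 - b 1 * c 0)

/-- Partial derivative `X_s` of a parametrized surface `X(s,t)`. -/
def pS (X : ℝ → ℝ → Fin 3 → ℝ) (s t : ℝ) : Fin 3 → ℝ := deriv (fun a => X a t) s

/-- Partial derivative `X_t`. -/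
def pT (X : ℝ → ℝ → Fin 3 → ℝ) (s t : ℝ) : Fin 3 → ℝ := deriv (fun b => X s b) t

/-- Second partial derivative `X_ss`. -/
def pSS (X : ℝ → ℝ → Fin 3 → ℝ) (s t : ℝ) : Fin 3 → ℝ := deriv (fun a => pS X a t) s

/-- Mixed second partial derivative `X_st`. -/
def pST (X : ℝ → ℝ → Fin 3 → ℝ) (s t : ℝ) : Fin 3 → ℝ := deriv (fun a => pT X a t) s

/-- Second partial derivative `X_tt`. -/
def pTT (X : ℝ → ℝ → Fin 3 → ℝ) (s t : ℝ) : Fin 3 → ℝ := deriv (fun b => pT X s b) t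

/-- Coefficient `E = ⟨X_s, X_s⟩` of the first fundamental form. -/
def coefE (X : ℝ → ℝ → Fin 3 → ℝ) (s t : ℝ) : ℝ := mink (pS X s t) (pS X s t)

/-- Coefficient `F = ⟨X_s, X_t⟩` of the first fundamental form. -/
def coefF (X : ℝ → ℝ → Fin 3 → ℝ) (s t : ℝ) : ℝ := mink (pS X s t) (pT X s t)

/-- Coefficient `G = ⟨X_t, X_t⟩` of the first fundamental form. -/
def coefG (X : ℝ → ℝ → Fin 3 → ℝ) (s t : ℝ) : ℝ := mink (pT X s t) (pT X s t)

/-- `EG − F²` at `(s,t)`. -/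
def disc (X : ℝ → ℝ → Fin 3 → ℝ) (s t : ℝ) : ℝ :=
  coefE X s t * coefG X s t - coefF X s t ^ 2

/-- The translating soliton equation with respect to the velocity `v` at the point `(s,t)`:
`E·det(X_s,X_t,X_tt) − 2F·det(X_s,X_t,X_st) + G·det(X_s,X_t,X_ss)
  = −|EG − F²|·det(X_s,X_t,v)`. -/
def SolitonEqAt (X : ℝ → ℝ → Fin 3 → ℝ) (v : Fin 3 → ℝ) (s t : ℝ) : Prop :=
  coefE X s t * det3 (pS X s t) (pT X s t) (pTT X s t)
    - 2 * coefF X s t * det3 (pS X s t) (pT X s t) (pST X s t)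
    + coefG X s t * det3 (pS X s t) (pT X s t) (pSS X s t)
  = -|disc X s t| * det3 (pS X s t) (pT X s t) v

/-!
The surface is ruled, `Y(s,t) = γ(s) + t • w(s)`, so `Y_t = w`, `Y_tt = 0`, `Y_st = w'` and
`Y_s, Y_ss` are affine in `t` with coefficients the derivatives of `γ` and `w`. Differentiating
the `log` and `arctan` terms of `γ` leaves only rational functions of `s` and `t`, and both
`EG − F² = (3 + 2t)/(1 + s²)` and the soliton equation become identities of rational functions.
-/

lemma hasDerivAt_vecCons₃ {f g h : ℝ → ℝ} {f' g' h' x : ℝ}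
    (hf : HasDerivAt f f' x) (hg : HasDerivAt g g' x) (hh : HasDerivAt h h' x) :
    HasDerivAt (fun a => ![f a, g a, h a]) ![f', g', h'] x := by
  rw [hasDerivAt_pi]
  intro i
  fin_cases i <;> simpa

section RuledSurface

variable (γ w : ℝ → Fin 3 → ℝ)

def ruledSurface : ℝ → ℝ → Fin 3 → ℝ := fun s t => γ s + t • w s

variable {γ w}

lemma pT_ruledSurface (s t : ℝ) : pT (ruledSurface γ w) s t = w s := by
  have h := ((hasDerivAt_id t).smul_const (w s)).const_add (γ s)
  rw [one_smul] at h
  exact h.deriv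

lemma pTT_ruledSurface (s t : ℝ) : pTT (ruledSurface γ w) s t = 0 := by
  simp only [pTT, pT_ruledSurface, deriv_const]

lemma pST_ruledSurface {w' : Fin 3 → ℝ} {s : ℝ} (hw : HasDerivAt w w' s) (t : ℝ) :
    pST (ruledSurface γ w) s t = w' := by
  simp only [pST, pT_ruledSurface]
  exact hw.deriv

lemma pS_ruledSurface {γ' w' : Fin 3 → ℝ} {s : ℝ} (hγ : HasDerivAt γ γ' s)
    (hw : HasDerivAt w w' s) (t : ℝ) :
    pS (ruledSurface γ w) s t = γ' + t • w' :=
  (hγ.add (hw.const_smul t)).deriv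

lemma pSS_ruledSurface {γ' w' : ℝ → Fin 3 → ℝ} {γ'' w'' : Fin 3 → ℝ} {s : ℝ}
    (hγ : ∀ a, HasDerivAt γ (γ' a) a) (hw : ∀ a, HasDerivAt w (w' a) a)
    (hγ' : HasDerivAt γ' γ'' s) (hw' : HasDerivAt w' w'' s) (t : ℝ) :
    pSS (ruledSurface γ w) s t = γ'' + t • w'' := by
  have hpS : (fun a => pS (ruledSurface γ w) a t) = fun a => γ' a + t • w' a :=
    funext fun a => pS_ruledSurface (hγ a) (hw a) t
  rw [pSS, hpS]
  exact (hγ'.add (hw'.const_smul t)).deriv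

end RuledSurface

section Translator

def translatorBase (s : ℝ) : Fin 3 → ℝ :=
  ![-(1 / 2) * Real.log (1 + s ^ 2), Real.arctan s + s, s]

def translatorRuling (s : ℝ) : Fin 3 → ℝ := ![1, s, s]

def translatorBaseDeriv (s : ℝ) : Fin 3 → ℝ := ![-s / (1 + s ^ 2), 1 / (1 + s ^ 2) + 1, 1]

lemma ruledSurface_translatorBase_translatorRuling :
    ruledSurface translatorBase translatorRuling = fun s t =>
      ![-(1 / 2) * Real.log (1 + s ^ 2) + t, Real.arctan s + s + t * s, s + t * s] := by
  ext s t i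
  fin_cases i <;> simp [ruledSurface, translatorBase, translatorRuling]

lemma hasDerivAt_one_add_sq (s : ℝ) : HasDerivAt (fun x : ℝ => 1 + x ^ 2) (2 * s) s := by
  simpa using (hasDerivAt_pow 2 s).const_add 1

lemma hasDerivAt_translatorBase (s : ℝ) :
    HasDerivAt translatorBase (translatorBaseDeriv s) s := by
  have hpos : (1 + s ^ 2) ≠ 0 := by positivity
  have hlog := ((Real.hasDerivAt_log hpos).comp s (hasDerivAt_one_add_sq s)).const_mul (-(1 / 2))
  refine hasDerivAt_vecCons₃ (hlog.congr_deriv ?_)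
    ((Real.hasDerivAt_arctan s).add (hasDerivAt_id s)) (hasDerivAt_id s)
  field_simp

lemma hasDerivAt_translatorBaseDeriv (s : ℝ) :
    HasDerivAt translatorBaseDeriv
      ![(s ^ 2 - 1) / (1 + s ^ 2) ^ 2, -(2 * s) / (1 + s ^ 2) ^ 2, 0] s := by
  have hpos : (1 + s ^ 2) ≠ 0 := by positivity
  refine hasDerivAt_vecCons₃ ?_ ?_ (hasDerivAt_const s 1)
  · exact ((hasDerivAt_id s).neg.div (hasDerivAt_one_add_sq s) hpos).congr_deriv
      (by simp only [Pi.neg_apply, id]; ring)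
  · exact (((hasDerivAt_const s 1).div (hasDerivAt_one_add_sq s) hpos).add_const 1).congr_deriv
      (by ring)

lemma hasDerivAt_translatorRuling (s : ℝ) : HasDerivAt translatorRuling ![0, 1, 1] s :=
  hasDerivAt_vecCons₃ (hasDerivAt_const s 1) (hasDerivAt_id s) (hasDerivAt_id s)

variable (s t : ℝ)

lemma pS_translator : pS (ruledSurface translatorBase translatorRuling) s t =
    ![-s / (1 + s ^ 2), 1 / (1 + s ^ 2) + 1 + t, 1 + t] := by
  rw [pS_ruledSurface (hasDerivAt_translatorBase s) (hasDerivAt_translatorRuling s)]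
  ext i
  fin_cases i <;> simp [translatorBaseDeriv]

lemma pSS_translator : pSS (ruledSurface translatorBase translatorRuling) s t =
    ![(s ^ 2 - 1) / (1 + s ^ 2) ^ 2, -(2 * s) / (1 + s ^ 2) ^ 2, 0] := by
  rw [pSS_ruledSurface hasDerivAt_translatorBase hasDerivAt_translatorRuling
    (hasDerivAt_translatorBaseDeriv s) (hasDerivAt_const s _), smul_zero, add_zero]

lemma disc_translator :
    disc (ruledSurface translatorBase translatorRuling) s t = (3 + 2 * t) / (1 + s ^ 2) := by
  simp only [disc, coefE, coefF, coefG, mink, pS_translator, pT_ruledSurface, translatorRuling,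
    Matrix.cons_val_zero, Matrix.cons_val_one, Matrix.cons_val_two, Matrix.head_cons,
    Matrix.tail_cons]
  field_simp
  ring

lemma disc_translator_pos {t : ℝ} (ht : -(3 / 2) < t) :
    0 < disc (ruledSurface translatorBase translatorRuling) s t := by
  rw [disc_translator]
  exact div_pos (by linarith) (by positivity)

lemma solitonEqAt_translator {t : ℝ} (ht : -(3 / 2) < t) :
    SolitonEqAt (ruledSurface translatorBase translatorRuling) ![1, 0, 0] s t := by
  rw [SolitonEqAt, abs_of_pos (disc_translator_pos s ht), disc_translator, pTT_ruledSurface,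
    pST_ruledSurface (hasDerivAt_translatorRuling s)]
  simp only [coefE, coefF, coefG, mink, det3, pS_translator, pSS_translator,
    pT_ruledSurface, translatorRuling, Pi.zero_apply, Matrix.cons_val_zero, Matrix.cons_val_one,
    Matrix.cons_val_two, Matrix.head_cons, Matrix.tail_cons]
  field_simp
  ring

end Translator

/-- the ruled surface
`Y(s,t) = (−(1/2)log(1+s²) + t, arctan s + s + ts, s + ts)`, `t > −3/2` (base curve
`γ(s) = (−(1/2)log(1+s²), arctan s + s, s)`, ruling direction `w(s) = (1,s,s)`), is
spacelike with `EG − F² = (3 + 2t)/(1 + s²) > 0` and is a non-cylindrical ruled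
translating soliton with respect to `v = (1,0,0)`. -/
theorem stmt19 :
    ∀ s t : ℝ, -(3 / 2) < t →
      disc (fun s t =>
          ![-(1 / 2) * Real.log (1 + s ^ 2) + t, Real.arctan s + s + t * s, s + t * s]) s t
        = (3 + 2 * t) / (1 + s ^ 2) ∧
      0 < disc (fun s t =>
          ![-(1 / 2) * Real.log (1 + s ^ 2) + t, Real.arctan s + s + t * s, s + t * s]) s t ∧
      SolitonEqAt
        (fun s t =>
          ![-(1 / 2) * Real.log (1 + s ^ 2) + t, Real.arctan s + s + t * s, s + t * s])
        ![1, 0, 0] s t := by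
  intro s t ht
  rw [← ruledSurface_translatorBase_translatorRuling]
  exact ⟨disc_translator s t, disc_translator_pos s ht, solitonEqAt_translator s ht⟩
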